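/- (Rule of Two Column Sums) Let A and B be the z-matrix and w-matrix of a singular sequence and C = A + B. If c_{ij} = 2 for some 1 ≤ i < j ≤ n, then ( Σ_{k≠i,j} (a_{ki} + a_{kj}) ) · ( Σ_{k≠i,j} (b_{ki} + b_{kj}) ) ≠ 0. -/

import Mathlib

open Filter Finset

/-- `Zq δ z k l` is the quantity `Z_{lk} = δ_{kl}^3 · (z_k − z_l)`
(and, applied to `w`, the quantity `W_{lk}`). -/
noncomputable def Zq {n : ℕ} (δ : Fin n → Fin n → ℂ) (z : Fin n → ℂ) (k l : Fin n) : ℂ :=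
  δ k l ^ 3 * (z k - z l)

/-- A singular sequence of normalized central configurations for the masses `m`:
sequences `z^{(N)}, w^{(N)} ∈ ℂ^n`, symmetric `δ^{(N)}`, and positive reals `ε_N → 0`
such that every term satisfies the central configuration equations
`z_k = ∑_{l≠k} m_l Z_{lk}`, `w_k = ∑_{l≠k} m_l W_{lk}`, the normalization
`δ_{kl}^2 z_{kl} w_{kl} = 1` (`k ≠ l`), the maximum of the `|z_k|, |Z_{kl}|`
(resp. `|w_k|, |W_{kl}|`) equals `ε_N^{-2}`, and all the sequences
`ε_N^2 z_k, ε_N^2 w_k, ε_N^2 Z_{kl}, ε_N^2 W_{kl}` converge. -/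
structure SingularSeq (n : ℕ) (m : Fin n → ℂ) : Type where
  z : ℕ → Fin n → ℂ
  w : ℕ → Fin n → ℂ
  delta : ℕ → Fin n → Fin n → ℂ
  eps : ℕ → ℝ
  eps_pos : ∀ N, 0 < eps N
  eps_lim : Tendsto eps atTop (nhds 0)
  delta_symm : ∀ N, ∀ k l : Fin n, delta N k l = delta N l k
  eq_z : ∀ N, ∀ k : Fin n, z N k = ∑ l ∈ univ.erase k, m l * Zq (delta N) (z N) k l
  eq_w : ∀ N, ∀ k : Fin n, w N k = ∑ l ∈ univ.erase k, m l * Zq (delta N) (w N) k l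
  normalize : ∀ N, ∀ k l : Fin n, k ≠ l →
    delta N k l ^ 2 * (z N l - z N k) * (w N l - w N k) = 1
  maxZ : ∀ N, IsGreatest
      ({x : ℝ | ∃ k, x = ‖z N k‖} ∪
        {x : ℝ | ∃ k l, k ≠ l ∧ x = ‖Zq (delta N) (z N) k l‖})
      (eps N ^ (-2 : ℤ))
  maxW : ∀ N, IsGreatest
      ({x : ℝ | ∃ k, x = ‖w N k‖} ∪
        {x : ℝ | ∃ k l, k ≠ l ∧ x = ‖Zq (delta N) (w N) k l‖})
      (eps N ^ (-2 : ℤ))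
  conv_z : ∀ k : Fin n, ∃ L : ℂ,
    Tendsto (fun N => (eps N : ℂ) ^ 2 * z N k) atTop (nhds L)
  conv_w : ∀ k : Fin n, ∃ L : ℂ,
    Tendsto (fun N => (eps N : ℂ) ^ 2 * w N k) atTop (nhds L)
  conv_Z : ∀ k l : Fin n, k ≠ l → ∃ L : ℂ,
    Tendsto (fun N => (eps N : ℂ) ^ 2 * Zq (delta N) (z N) k l) atTop (nhds L)
  conv_W : ∀ k l : Fin n, k ≠ l → ∃ L : ℂ,
    Tendsto (fun N => (eps N : ℂ) ^ 2 * Zq (delta N) (w N) k l) atTop (nhds L)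

/-- `A` and `B` are the z-matrix and the w-matrix of the singular sequence `S`:
symmetric `{0,1}`-matrices whose entries record which of the (convergent) sequences
`ε_N^2 z_i`, `ε_N^2 Z_{ij}` (resp. `ε_N^2 w_i`, `ε_N^2 W_{ij}`) have nonzero limit. -/
structure IsZWMatrices {n : ℕ} {m : Fin n → ℂ} (S : SingularSeq n m)
    (A B : Matrix (Fin n) (Fin n) ℕ) : Prop where
  zeroOne_A : ∀ i j, A i j = 0 ∨ A i j = 1
  symm_A : ∀ i j, A i j = A j i
  zeroOne_B : ∀ i j, B i j = 0 ∨ B i j = 1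
  symm_B : ∀ i j, B i j = B j i
  diag_A : ∀ i, A i i = 1 ↔
    ¬ Tendsto (fun N => (S.eps N : ℂ) ^ 2 * S.z N i) atTop (nhds 0)
  off_A : ∀ i j, i ≠ j → (A i j = 1 ↔
    ¬ Tendsto (fun N => (S.eps N : ℂ) ^ 2 * Zq (S.delta N) (S.z N) i j) atTop (nhds 0))
  diag_B : ∀ i, B i i = 1 ↔
    ¬ Tendsto (fun N => (S.eps N : ℂ) ^ 2 * S.w N i) atTop (nhds 0)
  off_B : ∀ i j, i ≠ j → (B i j = 1 ↔
    ¬ Tendsto (fun N => (S.eps N : ℂ) ^ 2 * Zq (S.delta N) (S.w N) i j) atTop (nhds 0))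

/-!
If `A_{ij} = B_{ij} = 1` but the `z`-column sum vanishes, the central configuration equations
for `z_i` and `z_j` show that `ε² z_{ij}` converges to `(m_i + m_j) · lim ε² Z_{ij} ≠ 0`.
Cubing the normalization gives `Z_{ij} W_{ij} z_{ij}² w_{ij}² = 1`, so after rescaling the product
of the limits is `lim ε¹² = 0`, forcing `ε² w_{ij} → 0`; but `Z_{ij} w_{ij} = W_{ij} z_{ij}` then
gives `0 = lim ε² W_{ij} · lim ε² z_{ij} ≠ 0`. The `w`-sum is handled by exchanging `z` and `w`.
-/

open scoped Topology

lemma Zq_swap {n : ℕ} {δ : Fin n → Fin n → ℂ} (hδ : ∀ k l, δ k l = δ l k) (z : Fin n → ℂ)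
    (k l : Fin n) : Zq δ z l k = -Zq δ z k l := by
  rw [Zq, Zq, hδ]
  ring

lemma Zq_mul_sub_comm {n : ℕ} (δ : Fin n → Fin n → ℂ) (z w : Fin n → ℂ) (i j : Fin n) :
    Zq δ z i j * (w i - w j) = Zq δ w i j * (z i - z j) := by
  rw [Zq, Zq]
  ring

lemma Zq_mul_Zq_mul_sq_mul_sq {n : ℕ} {δ : Fin n → Fin n → ℂ} {z w : Fin n → ℂ} {i j : Fin n}
    (h : δ i j ^ 2 * (z j - z i) * (w j - w i) = 1) :
    Zq δ z i j * Zq δ w i j * (z i - z j) ^ 2 * (w i - w j) ^ 2 = 1 := by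
  rw [Zq, Zq]
  linear_combination (δ i j ^ 4 * (z j - z i) ^ 2 * (w j - w i) ^ 2
    + δ i j ^ 2 * (z j - z i) * (w j - w i) + 1) * h

lemma not_tendsto_mul_mul_sq_mul_sq_zero {ι 𝕜 : Type*} [Field 𝕜] [TopologicalSpace 𝕜]
    [IsTopologicalRing 𝕜] [T2Space 𝕜] {l : Filter ι} [l.NeBot] {a b c d : ι → 𝕜}
    {α β γ η : 𝕜} (ha : Tendsto a l (𝓝 α)) (hb : Tendsto b l (𝓝 β)) (hc : Tendsto c l (𝓝 γ))
    (hd : Tendsto d l (𝓝 η)) (hα : α ≠ 0) (hβ : β ≠ 0) (hγ : γ ≠ 0)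
    (hexch : ∀ x, a x * d x = b x * c x) :
    ¬ Tendsto (fun x => a x * b x * c x ^ 2 * d x ^ 2) l (𝓝 0) := by
  intro hprod
  have hαη : α * η = β * γ := tendsto_nhds_unique ((ha.mul hd).congr hexch) (hb.mul hc)
  have hη : η ≠ 0 := by
    rintro rfl
    exact mul_ne_zero hβ hγ (by simpa using hαη.symm)
  exact mul_ne_zero (mul_ne_zero (mul_ne_zero hα hβ) (pow_ne_zero 2 hγ)) (pow_ne_zero 2 hη)
    (tendsto_nhds_unique ((((ha.mul hb).mul (hc.pow 2)).mul (hd.pow 2))) hprod)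

namespace SingularSeq

variable {n : ℕ} {m : Fin n → ℂ}

noncomputable def swap (S : SingularSeq n m) : SingularSeq n m where
  z := S.w
  w := S.z
  delta := S.delta
  eps := S.eps
  eps_pos := S.eps_pos
  eps_lim := S.eps_lim
  delta_symm := S.delta_symm
  eq_z := S.eq_w
  eq_w := S.eq_z
  normalize := fun N k l h => by linear_combination S.normalize N k l h
  maxZ := S.maxW
  maxW := S.maxZ
  conv_z := S.conv_w
  conv_w := S.conv_z
  conv_Z := S.conv_W
  conv_W := S.conv_Z

lemma tendsto_eps_pow (S : SingularSeq n m) {k : ℕ} (hk : k ≠ 0) :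
    Tendsto (fun N => (S.eps N : ℂ) ^ k) atTop (𝓝 0) := by
  simpa [zero_pow hk] using ((Complex.continuous_ofReal.tendsto 0).comp S.eps_lim).pow k

lemma sub_eq_mul_Zq_add_sum (S : SingularSeq n m) (N : ℕ) {i j : Fin n} (hij : i ≠ j) :
    S.z N i - S.z N j = (m i + m j) * Zq (S.delta N) (S.z N) i j +
      ∑ l ∈ univ.filter (fun k => k ≠ i ∧ k ≠ j),
        m l * (Zq (S.delta N) (S.z N) i l - Zq (S.delta N) (S.z N) j l) := by
  have hsi : (univ.erase i).erase j = univ.filter (fun k => k ≠ i ∧ k ≠ j) := by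
    ext k; simp [and_comm]
  have hsj : (univ.erase j).erase i = univ.filter (fun k => k ≠ i ∧ k ≠ j) := by
    ext k; simp
  rw [S.eq_z N i, S.eq_z N j, ← add_sum_erase _ _ (mem_erase.2 ⟨hij.symm, mem_univ j⟩),
    ← add_sum_erase _ _ (mem_erase.2 ⟨hij, mem_univ i⟩), hsi, hsj,
    Zq_swap (S.delta_symm N) _ i j]
  simp only [mul_sub, sum_sub_distrib]
  ring

end SingularSeq

namespace IsZWMatrices

variable {n : ℕ} {m : Fin n → ℂ} {S : SingularSeq n m} {A B : Matrix (Fin n) (Fin n) ℕ}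

lemma swap (h : IsZWMatrices S A B) : IsZWMatrices S.swap B A where
  zeroOne_A := h.zeroOne_B
  symm_A := h.symm_B
  zeroOne_B := h.zeroOne_A
  symm_B := h.symm_A
  diag_A := h.diag_B
  off_A := h.off_B
  diag_B := h.diag_A
  off_B := h.off_A

lemma tendsto_Zq_of_A_eq_zero (h : IsZWMatrices S A B) {k l : Fin n} (hkl : k ≠ l)
    (hA : A k l = 0) :
    Tendsto (fun N => (S.eps N : ℂ) ^ 2 * Zq (S.delta N) (S.z N) k l) atTop (𝓝 0) := by
  by_contra hc
  have := (h.off_A k l hkl).2 hc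
  omega

lemma tendsto_sub_of_sum_eq_zero (h : IsZWMatrices S A B) {i j : Fin n} (hij : i ≠ j)
    (hsum : ∑ k ∈ univ.filter (fun k => k ≠ i ∧ k ≠ j), (A k i + A k j) = 0) {L : ℂ}
    (hL : Tendsto (fun N => (S.eps N : ℂ) ^ 2 * Zq (S.delta N) (S.z N) i j) atTop (𝓝 L)) :
    Tendsto (fun N => (S.eps N : ℂ) ^ 2 * (S.z N i - S.z N j)) atTop
      (𝓝 ((m i + m j) * L)) := by
  have hrest : Tendsto (fun N => ∑ l ∈ univ.filter (fun k => k ≠ i ∧ k ≠ j),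
      m l * ((S.eps N : ℂ) ^ 2 * Zq (S.delta N) (S.z N) i l -
        (S.eps N : ℂ) ^ 2 * Zq (S.delta N) (S.z N) j l)) atTop (𝓝 0) := by
    rw [← sum_const_zero (s := univ.filter (fun k => k ≠ i ∧ k ≠ j))]
    refine tendsto_finsetSum _ fun l hl => ?_
    obtain ⟨hli, hlj⟩ : l ≠ i ∧ l ≠ j := (mem_filter.1 hl).2
    have hl0 := sum_eq_zero_iff.1 hsum l hl
    have hi := h.tendsto_Zq_of_A_eq_zero hli.symm (by rw [h.symm_A]; omega)
    have hj := h.tendsto_Zq_of_A_eq_zero hlj.symm (by rw [h.symm_A]; omega)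
    simpa using (hi.sub hj).const_mul (m l)
  refine add_zero ((m i + m j) * L) ▸ ((hL.const_mul (m i + m j)).add hrest).congr fun N => ?_
  rw [S.sub_eq_mul_Zq_add_sum N hij, mul_add, mul_sum]
  congr 1
  · ring
  · exact sum_congr rfl fun l _ => by ring

lemma sum_A_ne_zero (h : IsZWMatrices S A B) {i j : Fin n} (hij : i ≠ j) (hm : m i + m j ≠ 0)
    (hA : A i j = 1) (hB : B i j = 1) :
    ∑ k ∈ univ.filter (fun k => k ≠ i ∧ k ≠ j), (A k i + A k j) ≠ 0 := by
  intro hsum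
  obtain ⟨L, hL⟩ := S.conv_Z i j hij
  obtain ⟨M, hM⟩ := S.conv_W i j hij
  obtain ⟨Wi, hWi⟩ := S.conv_w i
  obtain ⟨Wj, hWj⟩ := S.conv_w j
  have hL0 : L ≠ 0 := by rintro rfl; exact (h.off_A i j hij).1 hA hL
  have hM0 : M ≠ 0 := by rintro rfl; exact (h.off_B i j hij).1 hB hM
  refine not_tendsto_mul_mul_sq_mul_sq_zero hL hM (h.tendsto_sub_of_sum_eq_zero hij hsum hL)
    ((hWi.sub hWj).congr fun N => (mul_sub _ _ _).symm) hL0 hM0 (mul_ne_zero hm hL0)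
    (fun N => ?_) ((S.tendsto_eps_pow (k := 12) (by norm_num)).congr fun N => ?_)
  · linear_combination (S.eps N : ℂ) ^ 4 * Zq_mul_sub_comm (S.delta N) (S.z N) (S.w N) i j
  · linear_combination (-(S.eps N : ℂ) ^ 12) *
      Zq_mul_Zq_mul_sq_mul_sq (S.normalize N i j hij)

end IsZWMatrices

theorem rule_of_two_column_sums_general (n : ℕ) (m : Fin n → ℂ)
    (hm : ∀ I : Finset (Fin n), I.Nonempty → ∑ k ∈ I, m k ≠ 0)
    (S : SingularSeq n m) (A B : Matrix (Fin n) (Fin n) ℕ)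
    (hAB : IsZWMatrices S A B) :
    ∀ i j : Fin n, i < j → A i j + B i j = 2 →
      (∑ k ∈ univ.filter (fun k => k ≠ i ∧ k ≠ j), (A k i + A k j)) *
        (∑ k ∈ univ.filter (fun k => k ≠ i ∧ k ≠ j), (B k i + B k j)) ≠ 0 := by
  intro i j hij hC
  obtain ⟨hA, hB⟩ : A i j = 1 ∧ B i j = 1 := by
    have := hAB.zeroOne_A i j
    have := hAB.zeroOne_B i j
    omega
  have hmij : m i + m j ≠ 0 := by
    simpa [sum_pair hij.ne] using hm {i, j} (insert_nonempty i {j})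
  exact mul_ne_zero (hAB.sum_A_ne_zero hij.ne hmij hA hB)
    (hAB.swap.sum_A_ne_zero hij.ne hmij hB hA)

theorem rule_of_two_column_sums (n : ℕ) (hn : 2 ≤ n) (m : Fin n → ℂ)
    (hm : ∀ I : Finset (Fin n), I.Nonempty → ∑ k ∈ I, m k ≠ 0)
    (S : SingularSeq n m) (A B : Matrix (Fin n) (Fin n) ℕ)
    (hAB : IsZWMatrices S A B) :
    ∀ i j : Fin n, i < j → A i j + B i j = 2 →
      (∑ k ∈ univ.filter (fun k => k ≠ i ∧ k ≠ j), (A k i + A k j)) *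
        (∑ k ∈ univ.filter (fun k => k ≠ i ∧ k ≠ j), (B k i + B k j)) ≠ 0 :=
  rule_of_two_column_sums_general n m hm S A B hAB
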